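/- For φ ∈ {reduce, foreach}, for all filters xs, f, g, all variables $y, and a variable $x distinct from $y that occurs in neither xs nor g, the filter (φ xs as $y (f; g)) is equivalent to the filter (f as $x | φ xs as $y ($x; g)); that is, binding the initial-value filter f to a fresh variable first does not change the result. -/

import Mathlib

/-!
Formalization of the jq-style filter language and its denotational semantics.

* Values `Val` are booleans, integers or arrays.
* A value result `VRes` is a value or the error `⊥` (encoded as `none`).
* A context `Ctx` maps variables (strings) to value results
  (contexts may also bind a variable to the error `⊥`).
* Streams are finite lists of value results; `Σ_{x∈s} h x` is `s.flatMap h`.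
-/

namespace Jq

/-- JSON-like values: `v ::= true | false | n | [v,…,v]`. -/
inductive Val : Type where
  | bool : Bool → Val
  | int  : Int → Val
  | arr  : List Val → Val

mutual
def Val.decEq : (a b : Val) → Decidable (a = b)
  | .bool a, .bool b =>
      if h : a = b then .isTrue (by rw [h]) else .isFalse (by simp [h])
  | .int a, .int b =>
      if h : a = b then .isTrue (by rw [h]) else .isFalse (by simp [h])
  | .arr a, .arr b =>
      match Val.decEqList a b with
      | .isTrue h => .isTrue (by rw [h])
      | .isFalse h => .isFalse (by simp [h])
  | .bool _, .int _ => .isFalse (fun h => Val.noConfusion h)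
  | .bool _, .arr _ => .isFalse (fun h => Val.noConfusion h)
  | .int _, .bool _ => .isFalse (fun h => Val.noConfusion h)
  | .int _, .arr _ => .isFalse (fun h => Val.noConfusion h)
  | .arr _, .bool _ => .isFalse (fun h => Val.noConfusion h)
  | .arr _, .int _ => .isFalse (fun h => Val.noConfusion h)

def Val.decEqList : (a b : List Val) → Decidable (a = b)
  | [], [] => .isTrue rfl
  | [], _ :: _ => .isFalse (fun h => List.cons_ne_nil _ _ h.symm)
  | _ :: _, [] => .isFalse (fun h => List.cons_ne_nil _ _ h)
  | a :: as, b :: bs =>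
      match Val.decEq a b, Val.decEqList as bs with
      | .isTrue h1, .isTrue h2 => .isTrue (by rw [h1, h2])
      | .isFalse h1, _ => .isFalse (by simp [h1])
      | .isTrue _, .isFalse h2 => .isFalse (by simp [h2])
end

instance : DecidableEq Val := Val.decEq

/-- A value result: a value or the error `⊥` (= `none`). -/
abbrev VRes := Option Val

/-- A context maps variables to value results. -/
abbrev Ctx := String → VRes

/-- `c{$x ↦ r}` -/
def Ctx.update (c : Ctx) (x : String) (r : VRes) : Ctx :=
  fun y => if y = x then r else c y

/-- `[s]`: the array of the elements of the stream `s` if none of them is `⊥`,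
and (the leftmost) `⊥` otherwise. -/
def collectArr (s : List VRes) : VRes :=
  if s.all Option.isSome then some (.arr (s.filterMap id)) else none

/-- `ite(x, i, t, e) = ⟨⊥⟩` if `x = ⊥`, `t` if `x = i`, `e` otherwise. -/
def iteV (x : VRes) (i : Val) (t e : List VRes) : List VRes :=
  match x with
  | none => [none]
  | some x => if x = i then t else e

/-- `v[i] = v_i` if `v = [v_0,…,v_n]` and `0 ≤ i ≤ n`, and `⊥` otherwise. -/
def vidx (v : Val) (i : VRes) : VRes :=
  match v, i with
  | .arr vs, some (.int n) =>
      if h : 0 ≤ n ∧ n.toNat < vs.length then some (vs[n.toNat]'h.2) else none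
  | _, _ => none

/-- jq-style filters.  A Cartesian operator `∘` is any function from pairs of
values to value results (e.g. `+`, `=`); `cst w` is the constant filter `⌜w⌝`. -/
inductive Filter : Type where
  /-- integer literal `n` -/
  | lit : Int → Filter
  /-- constant filter `⌜w⌝` -/
  | cst : Val → Filter
  /-- variable `$x` -/
  | var : String → Filter
  /-- identity `.` -/
  | id : Filter
  /-- `.[]` -/
  | iter : Filter
  /-- `.[f]` -/
  | idx : Filter → Filter
  /-- `[f]` -/
  | arr : Filter → Filter
  /-- `f?` -/
  | opt : Filter → Filter
  /-- `f, g` -/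
  | comma : Filter → Filter → Filter
  /-- `f | g` -/
  | pipe : Filter → Filter → Filter
  /-- `f ∘ g` for a Cartesian operator `∘` -/
  | cart : (Val → Val → VRes) → Filter → Filter → Filter
  /-- `f and g` -/
  | and : Filter → Filter → Filter
  /-- `f or g` -/
  | or : Filter → Filter → Filter
  /-- `if f then g else h` -/
  | ite : Filter → Filter → Filter → Filter
  /-- `f as $x | g` -/
  | bind : Filter → String → Filter → Filter
  /-- `reduce xs as $x (init; f)` -/
  | reduce : Filter → String → Filter → Filter → Filter
  /-- `foreach xs as $x (init; f)` -/
  | foreach : Filter → String → Filter → Filter → Filter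
  /-- `empty` -/
  | empty : Filter

/-- `φ^c_v(xs, f)` for `φ ∈ {reduce, foreach}`, abstracted over the step
function `step x v = f|^{c{$x↦x}}_v`:
`φ^c_v(⟨x⟩+xt, f) = (⟨⟩ if reduce, ⟨v⟩ if foreach) + Σ_{y∈step x v} φ^c_y(xt, f)`
and `φ^c_v(⟨⟩, f) = ⟨v⟩`. -/
def foldPhi (isReduce : Bool) (step : VRes → VRes → List VRes) :
    List VRes → VRes → List VRes
  | [], v => [v]
  | x :: xt, v =>
      (if isReduce then [] else [v]) ++
        (step x v).flatMap (fun y => foldPhi isReduce step xt y)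

/-- The evaluation `f|^c_v` of a filter `f` in context `c` on a value `v`,
returning a stream of value results. -/
def eval : Filter → Ctx → Val → List VRes
  | .empty, _, _ => []
  | .id, _, v => [some v]
  | .lit n, _, _ => [some (.int n)]
  | .cst w, _, _ => [some w]
  | .var x, c, _ => [c x]
  | .arr f, c, v => [collectArr (eval f c v)]
  | .comma f g, c, v => eval f c v ++ eval g c v
  | .pipe f g, c, v =>
      (eval f c v).flatMap (fun r => match r with
        | none => [none]
        | some w => eval g c w)
  | .bind f x g, c, v =>
      (eval f c v).flatMap (fun r => eval g (c.update x r) v)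
  | .cart op f g, c, v =>
      (eval f c v).flatMap (fun x =>
        (eval g c v).flatMap (fun y =>
          match x, y with
          | some x, some y => [op x y]
          | _, _ => [none]))
  | .opt f, c, v =>
      (eval f c v).flatMap (fun r => match r with
        | none => []
        | some w => [some w])
  | .and f g, c, v =>
      (eval f c v).flatMap (fun r => iteV r (.bool false) [some (.bool false)] (eval g c v))
  | .or f g, c, v =>
      (eval f c v).flatMap (fun r => iteV r (.bool true) [some (.bool true)] (eval g c v))
  | .ite f g h, c, v =>
      (eval f c v).flatMap (fun r => iteV r (.bool true) (eval g c v) (eval h c v))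
  | .iter, _, v =>
      match v with
      | .arr vs => vs.map some
      | _ => [none]
  | .idx f, c, v => (eval f c v).flatMap (fun i => [vidx v i])
  | .reduce xs x init f, c, v =>
      (eval init c v).flatMap (fun i =>
        foldPhi true (fun r st => match st with
          | none => [none]
          | some w => eval f (c.update x r) w) (eval xs c v) i)
  | .foreach xs x init f, c, v =>
      (eval init c v).flatMap (fun i =>
        foldPhi false (fun r st => match st with
          | none => [none]
          | some w => eval f (c.update x r) w) (eval xs c v) i)

/-- The evaluation of a filter on a value result: `f|^c_⊥ = ⟨⊥⟩`. -/
def evalR (f : Filter) (c : Ctx) (r : VRes) : List VRes :=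
  match r with
  | none => [none]
  | some v => eval f c v

/-- Two filters are equivalent iff `f|^c_v = g|^c_v` for all contexts `c` and
value results `v`. -/
def Filter.Equiv (f g : Filter) : Prop :=
  ∀ (c : Ctx) (r : VRes), evalR f c r = evalR g c r

/-- The variable `$x` occurs in the filter `f` (including binding occurrences). -/
def occurs (x : String) : Filter → Prop
  | .lit _ => False
  | .cst _ => False
  | .id => False
  | .iter => False
  | .empty => False
  | .var y => y = x
  | .idx f => occurs x f
  | .arr f => occurs x f
  | .opt f => occurs x f
  | .comma f g => occurs x f ∨ occurs x g
  | .pipe f g => occurs x f ∨ occurs x g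
  | .cart _ f g => occurs x f ∨ occurs x g
  | .and f g => occurs x f ∨ occurs x g
  | .or f g => occurs x f ∨ occurs x g
  | .ite f g h => occurs x f ∨ occurs x g ∨ occurs x h
  | .bind f y g => occurs x f ∨ y = x ∨ occurs x g
  | .reduce xs y i f => occurs x xs ∨ y = x ∨ occurs x i ∨ occurs x f
  | .foreach xs y i f => occurs x xs ∨ y = x ∨ occurs x i ∨ occurs x f

end Jq

namespace Jq

/-- `φ xs as $y (init; f)` for `φ ∈ {reduce, foreach}` (`true` = reduce). -/
def phiFold (isReduce : Bool) (xs : Filter) (y : String) (init f : Filter) :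
    Filter :=
  if isReduce then .reduce xs y init f else .foreach xs y init f

theorem Ctx.update_self (c : Ctx) (x : String) (r : VRes) : c.update x r x = r := by
  simp [Ctx.update]

theorem Ctx.update_comm (c : Ctx) {x y : String} (h : x ≠ y) (r s : VRes) :
    (c.update x r).update y s = (c.update y s).update x r := by
  funext z
  simp only [Ctx.update]
  split_ifs <;> simp_all

theorem eval_reduce (xs : Filter) (y : String) (init f : Filter) (c : Ctx) (v : Val) :
    eval (.reduce xs y init f) c v =
      (eval init c v).flatMap (foldPhi true (fun r => evalR f (c.update y r)) (eval xs c v)) :=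
  rfl

theorem eval_foreach (xs : Filter) (y : String) (init f : Filter) (c : Ctx) (v : Val) :
    eval (.foreach xs y init f) c v =
      (eval init c v).flatMap (foldPhi false (fun r => evalR f (c.update y r)) (eval xs c v)) :=
  rfl

theorem eval_phiFold (isReduce : Bool) (xs : Filter) (y : String) (init f : Filter) (c : Ctx)
    (v : Val) :
    eval (phiFold isReduce xs y init f) c v =
      (eval init c v).flatMap
        (foldPhi isReduce (fun r => evalR f (c.update y r)) (eval xs c v)) := by
  cases isReduce
  · exact eval_foreach ..
  · exact eval_reduce ..

theorem eval_update_of_not_occurs {x : String} {f : Filter} (hf : ¬ occurs x f) (r : VRes)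
    (c : Ctx) (v : Val) : eval f (c.update x r) v = eval f c v := by
  induction f generalizing c v with
  | var y =>
    simp only [occurs] at hf
    simp [eval, Ctx.update, hf]
  | pipe f g ihf ihg =>
    simp only [occurs, not_or] at hf
    simp only [eval, ihf hf.1]
    congr 1
    funext w
    cases w
    · rfl
    · exact ihg hf.2 ..
  | bind f y g ihf ihg =>
    simp only [occurs, not_or] at hf
    obtain ⟨hf, hyx, hg⟩ := hf
    simp only [eval, ihf hf]
    congr 1
    funext w
    rw [Ctx.update_comm c (Ne.symm hyx)]
    exact ihg hg ..
  | reduce xs y i f ihxs ihi ihf | foreach xs y i f ihxs ihi ihf =>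
    simp only [occurs, not_or] at hf
    obtain ⟨hxs, hyx, hi, hf⟩ := hf
    simp only [eval_reduce, eval_foreach, ihxs hxs, ihi hi]
    congr 2
    funext s st
    cases st
    · rfl
    · rw [Ctx.update_comm c (Ne.symm hyx)]
      exact ihf hf ..
  | _ => simp_all [occurs, eval]

theorem evalR_update_of_not_occurs {x : String} {f : Filter} (hf : ¬ occurs x f) (r : VRes)
    (c : Ctx) (s : VRes) : evalR f (c.update x r) s = evalR f c s := by
  cases s
  · rfl
  · exact eval_update_of_not_occurs hf ..

/-- For `φ ∈ {reduce, foreach}`, for all filters `xs`, `f`, `g`, all variables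
`$y`, and a variable `$x` distinct from `$y` that occurs in neither `xs` nor
`g`, the filter `(φ xs as $y (f; g))` is equivalent to the filter
`(f as $x | φ xs as $y ($x; g))`; that is, binding the initial-value filter
`f` to a fresh variable first does not change the result. -/
theorem statement9 (isReduce : Bool) (xs f g : Filter) (y x : String)
    (hxy : x ≠ y) (hxs : ¬ occurs x xs) (hg : ¬ occurs x g) :
    (phiFold isReduce xs y f g).Equiv
      (.bind f x (phiFold isReduce xs y (.var x) g)) := by
  rintro c (_ | v)
  · rfl
  -- `$x` is read only as the initial value; elsewhere the update `c{$x ↦ w}` is invisible.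
  have step_eq (w : VRes) :
      (fun s => evalR g ((c.update x w).update y s)) = fun s => evalR g (c.update y s) := by
    funext s
    rw [Ctx.update_comm c hxy]
    exact funext (evalR_update_of_not_occurs hg w _)
  simp only [evalR, eval, eval_phiFold, Ctx.update_self, step_eq,
    eval_update_of_not_occurs hxs, List.flatMap_singleton]

end Jq
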